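/- Let β > 0, γ > 0 and d ∈ ℕ, and for each integer N ≥ 2 define m_N := (d+1)·5^N·N^{2βN}. Then for every δ > 0 there exists N₀ such that for all N ≥ N₀ one has exp(−β·N·log N) · m_N^{−γ} ≤ m_N^{−γ−1/2+δ}. Consequently, if a surrogate model trained on m points has error O(m^{−γ}) and the full-history Multilevel Picard correction contributes a multiplicative factor exp(N log N(−β+o(1))), then the total SCaSML error with budget m_N is O(m_N^{−γ−1/2+o(1)}), which is asymptotically strictly smaller than the surrogate rate O(m_N^{−γ}). -/
import Mathlib


/-- Total sample budget `m_N = (d+1)·5^N·N^{2βN}` of the SCaSML procedure with `N`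
full-history Multilevel Picard levels. -/
noncomputable def scasmlBudget (β : ℝ) (d : ℕ) (N : ℕ) : ℝ :=
  ((d:ℝ) + 1) * 5 ^ N * (N:ℝ) ^ (2 * β * (N:ℝ))

/-- Improved Scaling Law, analytic core: for every `δ > 0`,
eventually `exp(−β·N·log N)·m_N^{−γ} ≤ m_N^{−γ−1/2+δ}`, i.e. multiplying the
surrogate rate `m^{−γ}` by the Multilevel Picard factor improves the exponent
from `γ` to `γ + 1/2 − o(1)`. -/
theorem scasml_improved_scaling_law (β γ : ℝ) (hβ : 0 < β) (hγ : 0 < γ) (d : ℕ) :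
    ∀ δ > (0:ℝ), ∃ N₀ : ℕ, ∀ N : ℕ, N₀ ≤ N →
      Real.exp (-β * (N:ℝ) * Real.log (N:ℝ)) * scasmlBudget β d N ^ (-γ)
        ≤ scasmlBudget β d N ^ (-γ - 1/2 + δ) := by
  intro δ hδ
  set A := Real.log ((d:ℝ) + 1) with hA
  set L := Real.log 5 with hLdef
  refine ⟨max 2 (⌈Real.exp ((A + L) / (2 * δ * β))⌉₊ + 1), ?_⟩
  intro N hN
  have hN2 : 2 ≤ N := le_trans (le_max_left _ _) hN
  have hNc : ⌈Real.exp ((A + L) / (2 * δ * β))⌉₊ + 1 ≤ N :=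
    le_trans (le_max_right _ _) hN
  have hNpos : (0:ℝ) < N := by
    have : 0 < N := by omega
    exact_mod_cast this
  have hNR2 : (2:ℝ) ≤ N := by exact_mod_cast hN2
  have hd : (0:ℝ) < (d:ℝ) + 1 := by positivity
  have h5 : (0:ℝ) < (5:ℝ) ^ N := by positivity
  have hr : (0:ℝ) < (N:ℝ) ^ (2 * β * (N:ℝ)) := Real.rpow_pos_of_pos hNpos _
  have hm : 0 < scasmlBudget β d N := by
    unfold scasmlBudget; exact mul_pos (mul_pos hd h5) hr
  have hA0 : 0 ≤ A := Real.log_nonneg (by linarith)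
  have hL0 : 0 ≤ L := Real.log_nonneg (by norm_num)
  have hlogN0 : 0 ≤ Real.log N := Real.log_nonneg (by linarith)
  have h2db : 0 < 2 * δ * β := by positivity
  -- log N is large
  have hexpN : Real.exp ((A + L) / (2 * δ * β)) ≤ (N:ℝ) := by
    have h1 : Real.exp ((A + L) / (2 * δ * β)) ≤
        (⌈Real.exp ((A + L) / (2 * δ * β))⌉₊ : ℝ) := Nat.le_ceil _
    have h2 : ((⌈Real.exp ((A + L) / (2 * δ * β))⌉₊ : ℝ)) ≤ (N:ℝ) := by
      exact_mod_cast le_trans (Nat.le_succ _) hNc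
    linarith
  have hlogN : (A + L) / (2 * δ * β) ≤ Real.log N :=
    (Real.le_log_iff_exp_le hNpos).mpr hexpN
  have hlogN' : A + L ≤ 2 * δ * β * Real.log N := by
    have := (div_le_iff₀ h2db).mp hlogN
    linarith
  -- log of the budget
  have hlog : Real.log (scasmlBudget β d N)
      = A + (N:ℝ) * L + 2 * β * (N:ℝ) * Real.log N := by
    unfold scasmlBudget
    rw [Real.log_mul (by positivity) (ne_of_gt hr),
      Real.log_mul (ne_of_gt hd) (ne_of_gt h5), Real.log_pow,
      Real.log_rpow hNpos]
  -- key exponent inequality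
  have hkey : -β * (N:ℝ) * Real.log N
      ≤ Real.log (scasmlBudget β d N) * (-1/2 + δ) := by
    rw [hlog]
    nlinarith [mul_le_mul_of_nonneg_left hlogN' (le_of_lt hNpos),
      mul_nonneg hδ.le hA0,
      mul_nonneg (mul_nonneg hδ.le hNpos.le) hL0,
      mul_nonneg hA0 hNpos.le]
  -- assemble
  have hsplit : scasmlBudget β d N ^ (-γ - 1/2 + δ)
      = scasmlBudget β d N ^ (-γ) *
        Real.exp (Real.log (scasmlBudget β d N) * (-1/2 + δ)) := by
    rw [show -γ - 1/2 + δ = -γ + (-1/2 + δ) by ring, Real.rpow_add hm,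
      Real.rpow_def_of_pos hm (-1/2 + δ)]
  rw [hsplit, mul_comm]
  exact mul_le_mul_of_nonneg_left (Real.exp_le_exp.mpr hkey)
    (Real.rpow_nonneg hm.le _)
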